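/- arXiv:2111.05637 — 3 statements merged into one kernel-verified Lean document; each statement's English description precedes it below -/
import Mathlib

section
/- Theorem (Γ-convergence of the Deep Ritz Method): In the Setting, assume Assumption (A1). Then the sequence of functionals (F_n^f) Γ-converges to F^f with respect to the weak topology of X, i.e.: (i) for every x ∈ X and every sequence (x_n) converging weakly to x, F^f(x) ≤ liminf_{n→∞} F_n^f(x_n); and (ii) for every x ∈ X there exists a sequence (x_n) converging weakly to x with F_n^f(x_n) → F^f(x). -/
/-!
Off the kernel of `γ`, Hahn–Banach keeps `‖γ uₙ‖` bounded away from `0` along a weakly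
convergent sequence, so the penalty `λₙ ‖γ uₙ‖ᵖ` diverges while `E uₙ - f uₙ` stays bounded
below by weak lower semicontinuity; hence `Fₙ uₙ → ∞`, which gives both the liminf inequality
and, with the constant sequence, a recovery sequence. On the kernel the penalty is eventually
nonnegative, so the liminf inequality is that of `E - f`, and the sequences of (A1) recover
`E - f` by norm continuity.
-/

open Filter Topology
open scoped Classical

/-- Weak convergence of a sequence in a normed space: convergence tested against
every continuous linear functional. -/
def WeakTendsto {X : Type*} [NormedAddCommGroup X] [NormedSpace ℝ X]
    (u : ℕ → X) (x : X) : Prop :=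
  ∀ φ : X →L[ℝ] ℝ, Tendsto (fun n => φ (u n)) atTop (𝓝 (φ x))

theorem EReal.le_liminf_add_of_tendsto {α : Type*} {l : Filter α} [l.NeBot] {u v : α → EReal}
    {a b : EReal} (ha : a ≤ liminf u l) (hv : Tendsto v l (𝓝 b)) : a + b ≤ liminf (u + v) l :=
  (add_le_add ha hv.liminf_eq.ge).trans EReal.le_liminf_add

namespace WeakTendsto

variable {X : Type*} [NormedAddCommGroup X] [NormedSpace ℝ X] {u : ℕ → X} {x : X}

theorem of_tendsto (h : Tendsto u atTop (𝓝 x)) : WeakTendsto u x :=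
  fun φ => (φ.continuous.tendsto x).comp h

theorem const (x : X) : WeakTendsto (fun _ => x) x :=
  fun _ => tendsto_const_nhds

theorem map {B : Type*} [NormedAddCommGroup B] [NormedSpace ℝ B] (h : WeakTendsto u x)
    (T : X →L[ℝ] B) : WeakTendsto (fun n => T (u n)) (T x) :=
  fun φ => h (φ.comp T)

theorem eventually_lt_norm (h : WeakTendsto u x) {c : ℝ} (hc : c < ‖x‖) :
    ∀ᶠ n in atTop, c < ‖u n‖ := by
  obtain ⟨ψ, hψ, hψx⟩ := exists_dual_vector'' ℝ x
  have hψu : Tendsto (fun n => ψ (u n)) atTop (𝓝 ‖x‖) := by simpa [hψx] using h ψ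
  filter_upwards [hψu.eventually_const_lt hc] with n hn
  calc c < ψ (u n) := hn
    _ ≤ ‖ψ‖ * ‖u n‖ := (le_abs_self _).trans (ψ.le_opNorm _)
    _ ≤ ‖u n‖ := mul_le_of_le_one_left (norm_nonneg _) hψ

end WeakTendsto

section Penalty

variable {X B : Type*} [NormedAddCommGroup X] [NormedSpace ℝ X] [NormedAddCommGroup B]
  [NormedSpace ℝ B] {γ : X →L[ℝ] B} {E : X → ℝ} {f : X →L[ℝ] ℝ} {p : ℝ} {lam : ℕ → ℝ}
  {u : ℕ → X} {x : X}

theorem le_liminf_sub_of_weakTendsto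
    (hE : (E x : EReal) ≤ liminf (fun n => (E (u n) : EReal)) atTop) (hu : WeakTendsto u x) :
    ((E x - f x : ℝ) : EReal) ≤ liminf (fun n => ((E (u n) - f (u n) : ℝ) : EReal)) atTop := by
  have hf : Tendsto (fun n => ((-f (u n) : ℝ) : EReal)) atTop (𝓝 ((-f x : ℝ) : EReal)) :=
    EReal.tendsto_coe.2 (hu f).neg
  simpa only [sub_eq_add_neg, EReal.coe_add, Pi.add_def] using
    EReal.le_liminf_add_of_tendsto hE hf

theorem le_liminf_penalized (hlam : Tendsto lam atTop atTop)
    (hE : (E x : EReal) ≤ liminf (fun n => (E (u n) : EReal)) atTop) (hu : WeakTendsto u x) :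
    ((E x - f x : ℝ) : EReal) ≤
      liminf (fun n => ((E (u n) + lam n * ‖γ (u n)‖ ^ p - f (u n) : ℝ) : EReal)) atTop := by
  refine (le_liminf_sub_of_weakTendsto hE hu).trans (liminf_le_liminf ?_)
  filter_upwards [hlam.eventually_ge_atTop 0] with n hn
  have : 0 ≤ lam n * ‖γ (u n)‖ ^ p := mul_nonneg hn (Real.rpow_nonneg (norm_nonneg _) p)
  exact EReal.coe_le_coe_iff.2 (by linarith)

theorem tendsto_penalty_atTop (hp : 0 ≤ p) (hlam : Tendsto lam atTop atTop)
    (hu : WeakTendsto u x) (hx : γ x ≠ 0) :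
    Tendsto (fun n => lam n * ‖γ (u n)‖ ^ p) atTop atTop := by
  set c := ‖γ x‖ / 2
  have hc : 0 < c := half_pos (norm_pos_iff.2 hx)
  refine tendsto_atTop_mono' atTop ?_ (hlam.atTop_mul_const (Real.rpow_pos_of_pos hc p))
  filter_upwards [(hu.map γ).eventually_lt_norm (half_lt_self (norm_pos_iff.2 hx)),
    hlam.eventually_ge_atTop 0] with n hn hlam_n
  exact mul_le_mul_of_nonneg_left (Real.rpow_le_rpow hc.le hn.le hp) hlam_n

theorem tendsto_penalized_atTop (hp : 0 ≤ p) (hlam : Tendsto lam atTop atTop)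
    (hE : (E x : EReal) ≤ liminf (fun n => (E (u n) : EReal)) atTop) (hu : WeakTendsto u x)
    (hx : γ x ≠ 0) :
    Tendsto (fun n => E (u n) + lam n * ‖γ (u n)‖ ^ p - f (u n)) atTop atTop := by
  have hbdd : ∀ᶠ n in atTop, E x - f x - 1 ≤ E (u n) - f (u n) := by
    filter_upwards [eventually_lt_of_lt_liminf ((EReal.coe_lt_coe_iff.2 (sub_one_lt _)).trans_le
      (le_liminf_sub_of_weakTendsto (f := f) hE hu))] with n hn
    exact (EReal.coe_lt_coe_iff.1 hn).le
  exact (tendsto_atTop_add_left_of_le' atTop _ hbdd (tendsto_penalty_atTop hp hlam hu hx)).congr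
    fun n => by ring

end Penalty

theorem deep_ritz_gamma_convergence_general
    {X B : Type*} [NormedAddCommGroup X] [NormedSpace ℝ X]
    [NormedAddCommGroup B] [NormedSpace ℝ B]
    (γ : X →L[ℝ] B)
    (E : X → ℝ)
    -- E is (sequentially) lower semicontinuous w.r.t. the weak topology of X
    (hElsc : ∀ (x : X) (u : ℕ → X), WeakTendsto u x →
      ((E x : EReal)) ≤ liminf (fun n => ((E (u n) : EReal))) atTop)
    -- E is continuous w.r.t. the norm topology of X
    (hEcont : Continuous E)
    (p : ℝ) (hp : 1 < p)
    (f : X →L[ℝ] ℝ)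
    (lam : ℕ → ℝ) (hlam : Tendsto lam atTop atTop)
    (A : ℕ → Set X)
    -- the penalized functionals
    (Fn : ℕ → X → EReal)
    (hFn : ∀ (n : ℕ) (x : X), Fn n x =
      if x ∈ A n then ((E x + lam n * ‖γ x‖ ^ p - f x : ℝ) : EReal) else ⊤)
    -- the limit functional
    (F : X → EReal)
    (hF : ∀ x : X, F x = if γ x = 0 then ((E x - f x : ℝ) : EReal) else ⊤)
    -- Assumption (A1)
    (hA1 : ∀ x : X, γ x = 0 → ∃ u : ℕ → X, (∀ n, u n ∈ A n) ∧
      Tendsto u atTop (𝓝 x) ∧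
      Tendsto (fun n => lam n * ‖γ (u n)‖ ^ p) atTop (𝓝 0)) :
    (∀ (x : X) (u : ℕ → X), WeakTendsto u x →
        F x ≤ liminf (fun n => Fn n (u n)) atTop) ∧
      (∀ x : X, ∃ u : ℕ → X, WeakTendsto u x ∧
        Tendsto (fun n => Fn n (u n)) atTop (𝓝 (F x))) := by
  have hFn_ge : ∀ n y, ((E y + lam n * ‖γ y‖ ^ p - f y : ℝ) : EReal) ≤ Fn n y := fun n y => by
    rw [hFn]; split_ifs <;> simp
  have blowup : ∀ x u, WeakTendsto u x → γ x ≠ 0 → Tendsto (fun n => Fn n (u n)) atTop (𝓝 ⊤) :=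
    fun x u hu hx => tendsto_nhds_top_mono (EReal.tendsto_coe_nhds_top_iff.2
      (tendsto_penalized_atTop (by linarith) hlam (hElsc x u hu) hu hx))
      (Eventually.of_forall fun n => hFn_ge n (u n))
  refine ⟨fun x u hu => ?_, fun x => ?_⟩
  · by_cases hx : γ x = 0
    · rw [hF, if_pos hx]
      exact (le_liminf_penalized hlam (hElsc x u hu) hu).trans
        (liminf_le_liminf (Eventually.of_forall fun n => hFn_ge n (u n)))
    · rw [(blowup x u hu hx).liminf_eq]
      exact le_top
  · by_cases hx : γ x = 0
    · obtain ⟨u, huA, hu, hpen⟩ := hA1 x hx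
      refine ⟨u, .of_tendsto hu, ?_⟩
      have hlim : Tendsto (fun n => E (u n) + lam n * ‖γ (u n)‖ ^ p - f (u n)) atTop
          (𝓝 (E x + 0 - f x)) :=
        (((hEcont.tendsto x).comp hu).add hpen).sub ((f.continuous.tendsto x).comp hu)
      simpa [hFn, huA, hF, hx] using EReal.tendsto_coe.2 hlim
    · rw [hF, if_neg hx]
      exact ⟨fun _ => x, .const x, blowup x _ (.const x) hx⟩

/-- **Γ-convergence of the Deep Ritz Method.**
Under Assumption (A1), the penalized functionals `(Fn n)` Γ-converge to `F`
with respect to the weak topology of `X`: the liminf inequality holds along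
every weakly convergent sequence, and every point admits a recovery sequence. -/
theorem deep_ritz_gamma_convergence
    {X B : Type*} [NormedAddCommGroup X] [NormedSpace ℝ X] [CompleteSpace X]
    [NormedAddCommGroup B] [NormedSpace ℝ B] [CompleteSpace B]
    (hXrefl : Function.Surjective (NormedSpace.inclusionInDoubleDual ℝ X))
    (hBrefl : Function.Surjective (NormedSpace.inclusionInDoubleDual ℝ B))
    (γ : X →L[ℝ] B)
    (E : X → ℝ)
    -- E is bounded from below
    (hEbdd : ∃ m : ℝ, ∀ x : X, m ≤ E x)
    -- E is (sequentially) lower semicontinuous w.r.t. the weak topology of X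
    (hElsc : ∀ (x : X) (u : ℕ → X), WeakTendsto u x →
      ((E x : EReal)) ≤ liminf (fun n => ((E (u n) : EReal))) atTop)
    -- E is continuous w.r.t. the norm topology of X
    (hEcont : Continuous E)
    (p : ℝ) (hp : 1 < p)
    (f : X →L[ℝ] ℝ)
    (lam : ℕ → ℝ) (hlam_pos : ∀ n, 0 < lam n) (hlam : Tendsto lam atTop atTop)
    (A : ℕ → Set X)
    -- the penalized functionals
    (Fn : ℕ → X → EReal)
    (hFn : ∀ (n : ℕ) (x : X), Fn n x =
      if x ∈ A n then ((E x + lam n * ‖γ x‖ ^ p - f x : ℝ) : EReal) else ⊤)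
    -- the limit functional
    (F : X → EReal)
    (hF : ∀ x : X, F x = if γ x = 0 then ((E x - f x : ℝ) : EReal) else ⊤)
    -- Assumption (A1)
    (hA1 : ∀ x : X, γ x = 0 → ∃ u : ℕ → X, (∀ n, u n ∈ A n) ∧
      Tendsto u atTop (𝓝 x) ∧
      Tendsto (fun n => lam n * ‖γ (u n)‖ ^ p) atTop (𝓝 0)) :
    (∀ (x : X) (u : ℕ → X), WeakTendsto u x →
        F x ≤ liminf (fun n => Fn n (u n)) atTop) ∧
      (∀ x : X, ∃ u : ℕ → X, WeakTendsto u x ∧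
        Tendsto (fun n => Fn n (u n)) atTop (𝓝 (F x))) :=
  deep_ritz_gamma_convergence_general γ E hElsc hEcont p hp f lam hlam A Fn hFn F hF hA1
end

section
/- Theorem (Weak convergence of the Deep Ritz Method to the unique minimizer): In the Setting, assume Assumptions (A1) and (A3), and assume that F^f possesses a unique global minimizer x^f ∈ X₀. Let (δ_n) be a sequence of non-negative reals converging to zero and let (x_n) be any sequence with F_n^f(x_n) ≤ inf_{z∈X} F_n^f(z) + δ_n for all n. Then x_n converges to x^f in the weak topology of X. -/
/-!
Comparing with a recovery sequence for `xf` (Assumption (A1)) bounds the penalized energies of the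
quasi-minimizers, so by equi-coercivity they are bounded and the penalty forces `γ (x n) → 0`.
In a reflexive space every bounded sequence has a weakly convergent subsequence; by weak lower
semicontinuity of `E` the limit `z` of such a subsequence lies in `X₀` and satisfies
`F z ≤ F xf`, hence `z = xf`. As every subsequence has a further subsequence converging weakly
to `xf`, so does the whole sequence.

The weak sequential compactness comes from Banach–Alaoglu in the bidual: the weak closure of a
bounded sequence is weakly compact, and it is metrizable because it lies in the separable closed
span of the sequence, whose points are separated by countably many functionals.
-/

open Filter Topology
open scoped Classical

theorem liminf_coe_le_of_le_of_tendsto {a b : ℕ → ℝ} {L : ℝ} (hab : ∀ n, a n ≤ b n)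
    (hb : Tendsto b atTop (𝓝 L)) : liminf (fun n => (a n : EReal)) atTop ≤ L := by
  rw [← (EReal.tendsto_coe.mpr hb).liminf_eq]
  exact liminf_le_liminf (Eventually.of_forall fun n => EReal.coe_le_coe_iff.mpr (hab n))

theorem tendsto_zero_of_mul_rpow_le {a lam : ℕ → ℝ} {p K : ℝ} (hp : 0 < p) (ha : ∀ n, 0 ≤ a n)
    (hlam_pos : ∀ n, 0 < lam n) (hlam : Tendsto lam atTop atTop)
    (hK : ∀ n, lam n * a n ^ p ≤ K) : Tendsto a atTop (𝓝 0) := by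
  have hap : Tendsto (fun n => a n ^ p) atTop (𝓝 0) :=
    squeeze_zero (fun n => Real.rpow_nonneg (ha n) p)
      (fun n => by rw [le_div_iff₀ (hlam_pos n), mul_comm]; exact hK n)
      (tendsto_const_nhds.div_atTop hlam)
  have := ((Real.continuousAt_rpow_const 0 p⁻¹ (Or.inr (by positivity))).tendsto).comp hap
  simpa [Function.comp_def, Real.rpow_rpow_inv (ha _) hp.ne', Real.zero_rpow (inv_ne_zero hp.ne')]
    using this

theorem mem_and_le_of_ite_le {α : Type*} {s : Set α} {g : α → ℝ} {y : α} {c : ℝ}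
    (h : (if y ∈ s then (g y : EReal) else ⊤) ≤ c) : y ∈ s ∧ g y ≤ c := by
  by_cases hy : y ∈ s
  · rw [if_pos hy] at h
    exact ⟨hy, EReal.coe_le_coe_iff.mp h⟩
  · rw [if_neg hy, top_le_iff] at h
    exact absurd h (EReal.coe_ne_top c)

section WeakTopology

open NormedSpace TopologicalSpace

variable {X : Type*} [NormedAddCommGroup X] [NormedSpace ℝ X]

theorem exists_dual_seq_separating_of_isSeparable {s : Set X} (hs : IsSeparable s) :
    ∃ g : ℕ → StrongDual ℝ X, ∀ x ∈ s, (∀ n, g n x = 0) → x = 0 := by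
  obtain ⟨c, hc, hsc⟩ := hs
  obtain ⟨y, hcy⟩ := Set.countable_iff_exists_subset_range.mp hc
  choose g hg1 hgy using fun n => exists_dual_vector'' ℝ (y n)
  refine ⟨g, fun x hx hgx => norm_eq_zero.mp ?_⟩
  by_contra hx0
  have hpos := (norm_nonneg x).lt_of_ne' hx0
  obtain ⟨n, hn⟩ := Metric.mem_closure_range_iff.mp (closure_mono hcy (hsc hx)) (‖x‖ / 3)
    (by positivity)
  rw [dist_eq_norm] at hn
  have hyn : ‖y n‖ ≤ ‖x - y n‖ :=
    calc ‖y n‖ = ‖g n (y n - x)‖ := by simp [hgx n, hgy n]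
      _ ≤ ‖g n‖ * ‖y n - x‖ := (g n).le_opNorm _
      _ ≤ ‖x - y n‖ := by
        rw [norm_sub_rev]; exact mul_le_of_le_one_left (norm_nonneg _) (hg1 n)
  linarith [norm_le_norm_add_norm_sub' x (y n)]

theorem isCompact_closure_weakSpace_of_isBounded
    (hrefl : Function.Surjective (inclusionInDoubleDual ℝ X)) {s : Set X}
    (hs : Bornology.IsBounded s) : IsCompact (closure (toWeakSpace ℝ X '' s)) := by
  refine isCompact_closure_of_isBounded ℝ X _
    (by rwa [Set.preimage_image_eq _ (toWeakSpace ℝ X).injective]) fun _ _ => ?_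
  obtain ⟨x, hx⟩ := hrefl _
  exact ⟨toWeakSpace ℝ X x, hx⟩

theorem continuous_dual_toWeakSpace_symm (φ : StrongDual ℝ X) :
    Continuous fun w : WeakSpace ℝ X => φ ((toWeakSpace ℝ X).symm w) :=
  WeakBilin.eval_continuous (topDualPairing ℝ X).flip φ

theorem exists_weakTendsto_subseq_of_bounded
    (hrefl : Function.Surjective (inclusionInDoubleDual ℝ X)) {u : ℕ → X} {C : ℝ}
    (hC : ∀ n, ‖u n‖ ≤ C) : ∃ ns : ℕ → ℕ, ∃ z, StrictMono ns ∧ WeakTendsto (u ∘ ns) z := by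
  set T := toWeakSpace ℝ X
  set S := Submodule.span ℝ (Set.range u)
  set Y := S.topologicalClosure
  obtain ⟨g, hg⟩ := exists_dual_seq_separating_of_isSeparable
    ((Set.countable_range u).isSeparable.span.closure : IsSeparable (Y : Set X))
  set K := closure (T '' Set.range u)
  have hKc : IsCompact K := isCompact_closure_weakSpace_of_isBounded hrefl
    (isBounded_iff_forall_norm_le.2 ⟨C, by rintro _ ⟨n, rfl⟩; exact hC n⟩)
  have hKY : K ⊆ T '' Y := by
    rw [← S.isClosed_topologicalClosure.closure_eq, Y.convex.toWeakSpace_closure ℝ]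
    exact closure_mono (Set.image_mono fun _ ⟨n, hn⟩ =>
      hn ▸ Submodule.le_topologicalClosure _ (Submodule.subset_span ⟨n, rfl⟩))
  have : CompactSpace K := isCompact_iff_compactSpace.mp hKc
  have : MetrizableSpace K := by
    refine Metric.PiNatEmbed.TopologicalSpace.MetrizableSpace.of_countable_separating
      (fun n (k : K) => g n (T.symm k))
      (fun n => (continuous_dual_toWeakSpace_symm (g n)).comp continuous_subtype_val) ?_
    intro a b hab
    by_contra! hgab
    obtain ⟨a', ha', ha⟩ := hKY a.2
    obtain ⟨b', hb', hb⟩ := hKY b.2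
    refine hab (Subtype.ext ?_)
    rw [← ha, ← hb, sub_eq_zero.mp (hg _ (Y.sub_mem ha' hb') fun n => ?_)]
    simpa [← ha, ← hb, sub_eq_zero] using hgab n
  obtain ⟨z, ns, hns, hlim⟩ :=
    SeqCompactSpace.tendsto_subseq fun n =>
      (⟨T (u n), subset_closure (Set.mem_image_of_mem T ⟨n, rfl⟩)⟩ : K)
  exact ⟨ns, T.symm z, hns, fun φ => ((continuous_dual_toWeakSpace_symm φ).tendsto z).comp
    ((continuous_subtype_val.tendsto z).comp hlim)⟩

theorem weakTendsto_of_bounded_of_forall_subseq_eq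
    (hrefl : Function.Surjective (inclusionInDoubleDual ℝ X)) {u : ℕ → X} {C : ℝ}
    (hC : ∀ n, ‖u n‖ ≤ C) {x : X}
    (h : ∀ (ns : ℕ → ℕ) (z : X), Tendsto ns atTop atTop → WeakTendsto (u ∘ ns) z → z = x) :
    WeakTendsto u x := fun φ =>
  tendsto_of_subseq_tendsto fun ns hns => by
    obtain ⟨ms, z, hms, hz⟩ := exists_weakTendsto_subseq_of_bounded hrefl fun n => hC (ns n)
    obtain rfl := h (ns ∘ ms) z (hns.comp hms.tendsto_atTop) hz
    exact ⟨ms, hz φ⟩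

theorem Filter.Tendsto.weakTendsto {u : ℕ → X} {x : X} (h : Tendsto u atTop (𝓝 x)) :
    WeakTendsto u x := fun φ => (φ.continuous.tendsto x).comp h

theorem WeakTendsto.unique {u : ℕ → X} {x y : X} (hx : WeakTendsto u x) (hy : WeakTendsto u y) :
    x = y :=
  sub_eq_zero.mp <| SeparatingDual.eq_zero_of_forall_dual_eq_zero (R := ℝ) fun φ => by
    rw [map_sub, tendsto_nhds_unique (hx φ) (hy φ), sub_self]

theorem WeakTendsto.map_s6 {Y : Type*} [NormedAddCommGroup Y] [NormedSpace ℝ Y] {u : ℕ → X} {x : X}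
    (h : WeakTendsto u x) (T : X →L[ℝ] Y) : WeakTendsto (T ∘ u) (T x) := fun φ => h (φ.comp T)

end WeakTopology

theorem deep_ritz_weak_convergence_general
    {X B : Type*} [NormedAddCommGroup X] [NormedSpace ℝ X]
    [NormedAddCommGroup B] [NormedSpace ℝ B]
    (hXrefl : Function.Surjective (NormedSpace.inclusionInDoubleDual ℝ X))
    (γ : X →L[ℝ] B)
    (E : X → ℝ)
    -- E is bounded from below
    (hEbdd : ∃ m : ℝ, ∀ x : X, m ≤ E x)
    -- E is (sequentially) lower semicontinuous w.r.t. the weak topology of X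
    (hElsc : ∀ (x : X) (u : ℕ → X), WeakTendsto u x →
      ((E x : EReal)) ≤ liminf (fun n => ((E (u n) : EReal))) atTop)
    -- E is continuous w.r.t. the norm topology of X
    (hEcont : Continuous E)
    (p : ℝ) (hp : 1 < p)
    (f : X →L[ℝ] ℝ)
    (lam : ℕ → ℝ) (hlam_pos : ∀ n, 0 < lam n) (hlam : Tendsto lam atTop atTop)
    (A : ℕ → Set X)
    -- the penalized functionals
    (Fn : ℕ → X → EReal)
    (hFn : ∀ (n : ℕ) (x : X), Fn n x =
      if x ∈ A n then ((E x + lam n * ‖γ x‖ ^ p - f x : ℝ) : EReal) else ⊤)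
    -- the limit functional
    (F : X → EReal)
    (hF : ∀ x : X, F x = if γ x = 0 then ((E x - f x : ℝ) : EReal) else ⊤)
    -- Assumption (A1)
    (hA1 : ∀ x : X, γ x = 0 → ∃ u : ℕ → X, (∀ n, u n ∈ A n) ∧
      Tendsto u atTop (𝓝 x) ∧
      Tendsto (fun n => lam n * ‖γ (u n)‖ ^ p) atTop (𝓝 0))
    -- Assumption (A3): equi-coercivity
    (hA3 : ∀ r : ℝ, ∃ C : ℝ, ∀ (n : ℕ) (x : X), Fn n x ≤ (r : EReal) → ‖x‖ ≤ C)
    -- xf is the unique global minimizer of F, and xf ∈ X₀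
    (xf : X) (hxf0 : γ xf = 0) (hxfmin : ∀ z : X, F xf ≤ F z)
    (hxfuniq : ∀ y : X, (∀ z : X, F y ≤ F z) → y = xf)
    -- quasi-minimizers
    (x : ℕ → X) (δ : ℕ → ℝ) (hδ : Tendsto δ atTop (𝓝 0))
    (hqm : ∀ n, Fn n (x n) ≤ (⨅ z : X, Fn n z) + (δ n : EReal)) :
    WeakTendsto x xf := by
  obtain ⟨m, hm⟩ := hEbdd
  obtain ⟨u, huA, hu, hupen⟩ := hA1 xf hxf0
  set G : ℕ → X → ℝ := fun n y => E y + lam n * ‖γ y‖ ^ p - f y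
  have hGu : Tendsto (fun n => G n (u n) + δ n) atTop (𝓝 (E xf - f xf)) := by
    simpa using ((((hEcont.tendsto xf).comp hu).add hupen).sub
      ((f.continuous.tendsto xf).comp hu)).add hδ
  have hx : ∀ n, x n ∈ A n ∧ G n (x n) ≤ G n (u n) + δ n := fun n => by
    refine mem_and_le_of_ite_le ((hFn n (x n)).symm.trans_le ((hqm n).trans ?_))
    have hFu : Fn n (u n) = (G n (u n) : EReal) := by rw [hFn, if_pos (huA n)]
    rw [EReal.coe_add, ← hFu]
    exact add_le_add_left (iInf_le _ _) _
  obtain ⟨R, hR⟩ := hGu.bddAbove_range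
  obtain ⟨C, hC⟩ := hA3 R
  have hxC : ∀ n, ‖x n‖ ≤ C := fun n => hC n (x n) <| by
    rw [hFn, if_pos (hx n).1]
    exact EReal.coe_le_coe_iff.mpr ((hx n).2.trans (hR ⟨n, rfl⟩))
  have hγx : Tendsto (fun n => ‖γ (x n)‖) atTop (𝓝 0) := by
    refine tendsto_zero_of_mul_rpow_le (K := R - m + ‖f‖ * C) (by linarith)
      (fun n => norm_nonneg _) hlam_pos hlam fun n => ?_
    have hfx : f (x n) ≤ ‖f‖ * C :=
      (le_abs_self _).trans ((f.le_opNorm _).trans (by gcongr; exact hxC n))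
    linarith [(hx n).2, hR ⟨n, rfl⟩, hm (x n)]
  have hEx : ∀ n, E (x n) ≤ G n (u n) + δ n + f (x n) := fun n => by
    have hpen : 0 ≤ lam n * ‖γ (x n)‖ ^ p := by have := hlam_pos n; positivity
    linarith [(hx n).2]
  refine weakTendsto_of_bounded_of_forall_subseq_eq hXrefl hxC fun ns z hns hz =>
    hxfuniq z fun w => le_trans ?_ (hxfmin w)
  have hγz : γ z = 0 :=
    (hz.map_s6 γ).unique (tendsto_zero_iff_norm_tendsto_zero.mpr (hγx.comp hns)).weakTendsto
  have hEz : E z ≤ E xf - f xf + f z := EReal.coe_le_coe_iff.mp <| (hElsc z _ hz).trans <|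
    liminf_coe_le_of_le_of_tendsto (fun k => hEx (ns k)) ((hGu.comp hns).add (hz f))
  rw [hF, hF, if_pos hγz, if_pos hxf0]
  exact EReal.coe_le_coe_iff.mpr (by linarith)

/-- **Weak convergence of the Deep Ritz Method to the unique minimizer.**
Under Assumptions (A1) and (A3), if the limit functional `F` possesses a unique
global minimizer `xf ∈ X₀`, then any sequence of `δ n`-quasi-minimizers of the
penalized functionals `(Fn n)` converges to `xf` in the weak topology of `X`. -/
theorem deep_ritz_weak_convergence
    {X B : Type*} [NormedAddCommGroup X] [NormedSpace ℝ X] [CompleteSpace X]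
    [NormedAddCommGroup B] [NormedSpace ℝ B] [CompleteSpace B]
    (hXrefl : Function.Surjective (NormedSpace.inclusionInDoubleDual ℝ X))
    (hBrefl : Function.Surjective (NormedSpace.inclusionInDoubleDual ℝ B))
    (γ : X →L[ℝ] B)
    (E : X → ℝ)
    -- E is bounded from below
    (hEbdd : ∃ m : ℝ, ∀ x : X, m ≤ E x)
    -- E is (sequentially) lower semicontinuous w.r.t. the weak topology of X
    (hElsc : ∀ (x : X) (u : ℕ → X), WeakTendsto u x →
      ((E x : EReal)) ≤ liminf (fun n => ((E (u n) : EReal))) atTop)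
    -- E is continuous w.r.t. the norm topology of X
    (hEcont : Continuous E)
    (p : ℝ) (hp : 1 < p)
    (f : X →L[ℝ] ℝ)
    (lam : ℕ → ℝ) (hlam_pos : ∀ n, 0 < lam n) (hlam : Tendsto lam atTop atTop)
    (A : ℕ → Set X)
    -- the penalized functionals
    (Fn : ℕ → X → EReal)
    (hFn : ∀ (n : ℕ) (x : X), Fn n x =
      if x ∈ A n then ((E x + lam n * ‖γ x‖ ^ p - f x : ℝ) : EReal) else ⊤)
    -- the limit functional
    (F : X → EReal)
    (hF : ∀ x : X, F x = if γ x = 0 then ((E x - f x : ℝ) : EReal) else ⊤)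
    -- Assumption (A1)
    (hA1 : ∀ x : X, γ x = 0 → ∃ u : ℕ → X, (∀ n, u n ∈ A n) ∧
      Tendsto u atTop (𝓝 x) ∧
      Tendsto (fun n => lam n * ‖γ (u n)‖ ^ p) atTop (𝓝 0))
    -- Assumption (A3): equi-coercivity
    (hA3 : ∀ r : ℝ, ∃ C : ℝ, ∀ (n : ℕ) (x : X), Fn n x ≤ (r : EReal) → ‖x‖ ≤ C)
    -- xf is the unique global minimizer of F, and xf ∈ X₀
    (xf : X) (hxf0 : γ xf = 0) (hxfmin : ∀ z : X, F xf ≤ F z)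
    (hxfuniq : ∀ y : X, (∀ z : X, F y ≤ F z) → y = xf)
    -- quasi-minimizers
    (x : ℕ → X) (δ : ℕ → ℝ) (hδ0 : ∀ n, 0 ≤ δ n) (hδ : Tendsto δ atTop (𝓝 0))
    (hqm : ∀ n, Fn n (x n) ≤ (⨅ z : X, Fn n z) + (δ n : EReal)) :
    WeakTendsto x xf :=
  deep_ritz_weak_convergence_general hXrefl γ E hEbdd hElsc hEcont p hp f lam hlam_pos hlam A Fn hFn
    F hF hA1 hA3 xf hxf0 hxfmin hxfuniq x δ hδ hqm
end

section
/- Liminf inequality with varying right-hand sides: In the two-norm Setting with Assumption (A4) (Assumptions (A1) and (A5) are not needed), let g_n, g ∈ Y* with g_n converging weakly to g in Y*, and set f_n = g_n∘j ∈ X* and f = g∘j ∈ X*. Then for every x ∈ X and every sequence (x_n) converging weakly to x in X, F^f(x) ≤ liminf_{n→∞} F_n^{f_n}(x_n); in particular, if γ(x) ≠ 0 then liminf_{n→∞} F_n^{f_n}(x_n) = ∞. -/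
/-!
Write `Fₙ(uₙ) ≥ (E(uₙ) - gₙ(j uₙ)) + λₙ‖γ uₙ‖ᵖ` and use superadditivity of `liminf`.
Complete continuity turns `uₙ ⇀ x` into `j uₙ → j x` in norm, and Banach–Steinhaus bounds
`‖gₙ‖` uniformly, so the varying linear term converges: `gₙ(j uₙ) → g₀(j x)`; together with weak
lower semicontinuity of `E` this handles the energy part. The penalty is eventually nonnegative,
and if `γ x ≠ 0` then `γ uₙ ⇀ γ x` keeps `‖γ uₙ‖ ≥ ‖γ x‖/2` eventually (weak lower
semicontinuity of the norm), so `λₙ‖γ uₙ‖ᵖ → ∞`.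
-/

open Filter Topology
open scoped Classical

theorem ContinuousLinearMap.tendsto_apply_of_tendsto_pointwise {𝕜 E F : Type*}
    [NontriviallyNormedField 𝕜] [NormedAddCommGroup E] [NormedSpace 𝕜 E] [CompleteSpace E]
    [NormedAddCommGroup F] [NormedSpace 𝕜 F]
    {g : ℕ → E →L[𝕜] F} {g₀ : E →L[𝕜] F} (hg : ∀ y, Tendsto (fun n => g n y) atTop (𝓝 (g₀ y)))
    {y : ℕ → E} {y₀ : E} (hy : Tendsto y atTop (𝓝 y₀)) :
    Tendsto (fun n => g n (y n)) atTop (𝓝 (g₀ y₀)) := by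
  obtain ⟨C, hC⟩ : ∃ C, ∀ n, ‖g n‖ ≤ C := banach_steinhaus fun z => by
    obtain ⟨C, hC⟩ := (hg z).norm.bddAbove_range
    exact ⟨C, fun n => hC (Set.mem_range_self n)⟩
  have hsmall : Tendsto (fun n => g n (y n - y₀)) atTop (𝓝 0) := by
    refine squeeze_zero_norm (fun n => (g n).le_of_opNorm_le (hC n) _) ?_
    simpa using ((tendsto_sub_nhds_zero_iff.2 hy).norm.const_mul C)
  simpa using hsmall.add (hg y₀)

theorem Filter.Tendsto.atTop_mul_of_eventually_ge {α : Type*} {l : Filter α} {f g : α → ℝ}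
    {c : ℝ} (hc : 0 < c) (hf : Tendsto f l atTop) (hg : ∀ᶠ x in l, c ≤ g x) :
    Tendsto (fun x => f x * g x) l atTop := by
  refine tendsto_atTop_mono' l ?_ (hf.atTop_mul_const hc)
  filter_upwards [hf.eventually_ge_atTop 0, hg] with x hfx hgx
  exact mul_le_mul_of_nonneg_left hgx hfx

theorem EReal.coe_add_le_liminf_of_tendsto {a b : ℕ → ℝ} {α β : ℝ}
    (ha : (α : EReal) ≤ liminf (fun n => (a n : EReal)) atTop) (hb : Tendsto b atTop (𝓝 β)) :
    ((α + β : ℝ) : EReal) ≤ liminf (fun n => ((a n + b n : ℝ) : EReal)) atTop := by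
  have hb' : liminf (fun n => (b n : EReal)) atTop = β := (EReal.tendsto_coe.2 hb).liminf_eq
  calc ((α + β : ℝ) : EReal) = α + β := EReal.coe_add α β
    _ ≤ liminf (fun n => (a n : EReal)) atTop + liminf (fun n => (b n : EReal)) atTop := by
      rw [hb']; exact add_le_add ha le_rfl
    _ ≤ liminf (fun n => ((a n + b n : ℝ) : EReal)) atTop := by
      simp only [EReal.coe_add]
      exact EReal.le_liminf_add

section WeakTendsto

variable {X B : Type*} [NormedAddCommGroup X] [NormedSpace ℝ X]
  [NormedAddCommGroup B] [NormedSpace ℝ B]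

theorem WeakTendsto.map_s10 {u : ℕ → X} {x : X} (hu : WeakTendsto u x) (T : X →L[ℝ] B) :
    WeakTendsto (fun n => T (u n)) (T x) :=
  fun φ => hu (φ.comp T)

theorem WeakTendsto.eventually_lt_norm_s10 {u : ℕ → X} {x : X} (hu : WeakTendsto u x) {c : ℝ}
    (hc : c < ‖x‖) : ∀ᶠ n in atTop, c < ‖u n‖ := by
  obtain ⟨φ, hφ_norm, hφx⟩ := exists_dual_vector'' ℝ x
  have hφu : Tendsto (fun n => φ (u n)) atTop (𝓝 ‖x‖) := by simpa [hφx] using hu φ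
  filter_upwards [hφu.eventually (eventually_gt_nhds hc)] with n hn
  calc c < φ (u n) := hn
    _ ≤ ‖φ (u n)‖ := Real.le_norm_self _
    _ ≤ 1 * ‖u n‖ := φ.le_of_opNorm_le hφ_norm _
    _ = ‖u n‖ := one_mul _

theorem WeakTendsto.le_liminf_penalty {v : ℕ → B} {b : B} (hv : WeakTendsto v b)
    {lam : ℕ → ℝ} (hlam : Tendsto lam atTop atTop) {p : ℝ} (hp : 0 ≤ p) :
    (if b = 0 then 0 else ⊤ : EReal) ≤
      liminf (fun n => ((lam n * ‖v n‖ ^ p : ℝ) : EReal)) atTop := by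
  split_ifs with hb
  · refine le_liminf_of_le (h := ?_)
    filter_upwards [hlam.eventually_ge_atTop 0] with n hn
    exact EReal.coe_nonneg.2 (mul_nonneg hn (Real.rpow_nonneg (norm_nonneg _) p))
  · have hc : 0 < ‖b‖ / 2 := half_pos (norm_pos_iff.2 hb)
    have hv_large : ∀ᶠ n in atTop, (‖b‖ / 2) ^ p ≤ ‖v n‖ ^ p := by
      filter_upwards [hv.eventually_lt_norm_s10 (half_lt_self (norm_pos_iff.2 hb))] with n hn
      exact Real.rpow_le_rpow hc.le hn.le hp
    have h_top := hlam.atTop_mul_of_eventually_ge (Real.rpow_pos_of_pos hc p) hv_large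
    exact (EReal.tendsto_coe_atTop.comp h_top).liminf_eq.ge

end WeakTendsto

theorem deep_ritz_liminf_varying_rhs_general
    {X B Y : Type*} [NormedAddCommGroup X] [NormedSpace ℝ X]
    [NormedAddCommGroup B] [NormedSpace ℝ B]
    [NormedAddCommGroup Y] [NormedSpace ℝ Y] [CompleteSpace Y]
    (γ : X →L[ℝ] B)
    (E : X → ℝ)
    -- E is (sequentially) lower semicontinuous w.r.t. the weak topology of X
    (hElsc : ∀ (x : X) (u : ℕ → X), WeakTendsto u x →
      ((E x : EReal)) ≤ liminf (fun n => ((E (u n) : EReal))) atTop)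
    (p : ℝ) (hp : 1 < p)
    (lam : ℕ → ℝ) (hlam : Tendsto lam atTop atTop)
    (A : ℕ → Set X)
    -- the penalized functionals with right-hand side f
    (Fn : (X →L[ℝ] ℝ) → ℕ → X → EReal)
    (hFn : ∀ (f : X →L[ℝ] ℝ) (n : ℕ) (x : X), Fn f n x =
      if x ∈ A n then ((E x + lam n * ‖γ x‖ ^ p - f x : ℝ) : EReal) else ⊤)
    -- the limit functionals with right-hand side f
    (F : (X →L[ℝ] ℝ) → X → EReal)
    (hF : ∀ (f : X →L[ℝ] ℝ) (x : X),
      F f x = if γ x = 0 then ((E x - f x : ℝ) : EReal) else ⊤)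
    -- the second norm, encoded by an injective dense-range embedding j : X → Y
    (j : X →L[ℝ] Y)
    -- Assumption (A4): j is completely continuous
    (hA4 : ∀ (u : ℕ → X) (x : X), WeakTendsto u x →
      Tendsto (fun n => j (u n)) atTop (𝓝 (j x)))
    -- weakly convergent right-hand sides
    (g : ℕ → (Y →L[ℝ] ℝ)) (g₀ : Y →L[ℝ] ℝ)
    (hg : ∀ y : Y, Tendsto (fun n => g n y) atTop (𝓝 (g₀ y))) :
    -- liminf inequality
    (∀ (x : X) (u : ℕ → X), WeakTendsto u x →
        F (g₀.comp j) x ≤ liminf (fun n => Fn ((g n).comp j) n (u n)) atTop) ∧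
      -- divergence at points violating the constraint
      (∀ (x : X) (u : ℕ → X), WeakTendsto u x → γ x ≠ 0 →
        liminf (fun n => Fn ((g n).comp j) n (u n)) atTop = ⊤) := by
  have liminf_ineq : ∀ (x : X) (u : ℕ → X), WeakTendsto u x →
      F (g₀.comp j) x ≤ liminf (fun n => Fn ((g n).comp j) n (u n)) atTop := by
    intro x u hu
    have h_energy := EReal.coe_add_le_liminf_of_tendsto (hElsc x u hu)
      (ContinuousLinearMap.tendsto_apply_of_tendsto_pointwise hg (hA4 u x hu)).neg
    have h_penalty := (hu.map_s10 γ).le_liminf_penalty hlam (by linarith : (0 : ℝ) ≤ p)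
    calc F (g₀.comp j) x ≤ ((E x + -g₀ (j x) : ℝ) : EReal) + (if γ x = 0 then 0 else ⊤) := by
          rw [hF]; split_ifs <;> simp [sub_eq_add_neg]
      _ ≤ _ := (add_le_add h_energy h_penalty).trans EReal.le_liminf_add
      _ ≤ liminf (fun n => Fn ((g n).comp j) n (u n)) atTop := by
          refine liminf_le_liminf (Eventually.of_forall fun n => ?_)
          rw [hFn]
          split_ifs
          · rw [Pi.add_apply, ← EReal.coe_add, ContinuousLinearMap.comp_apply]
            exact EReal.coe_le_coe_iff.2 (by linarith)
          · exact le_top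
  refine ⟨liminf_ineq, fun x u hu hγx => top_le_iff.1 ?_⟩
  simpa [hF, hγx] using liminf_ineq x u hu

/-- **Liminf inequality with varying right-hand sides.**
In the two-norm Deep Ritz setting with Assumption (A4), if `g n ⇀ g₀` weakly in
`Y*` and `f n = g n ∘ j`, `f₀ = g₀ ∘ j`, then for every sequence `(u n)`
converging weakly to `x` in `X` one has
`F f₀ x ≤ liminf Fn (f n) n (u n)`; in particular the liminf is `∞` whenever
`γ x ≠ 0`. -/
theorem deep_ritz_liminf_varying_rhs
    {X B Y : Type*} [NormedAddCommGroup X] [NormedSpace ℝ X] [CompleteSpace X]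
    [NormedAddCommGroup B] [NormedSpace ℝ B] [CompleteSpace B]
    [NormedAddCommGroup Y] [NormedSpace ℝ Y] [CompleteSpace Y]
    (hXrefl : Function.Surjective (NormedSpace.inclusionInDoubleDual ℝ X))
    (hBrefl : Function.Surjective (NormedSpace.inclusionInDoubleDual ℝ B))
    (hYrefl : Function.Surjective (NormedSpace.inclusionInDoubleDual ℝ Y))
    (γ : X →L[ℝ] B)
    (E : X → ℝ)
    -- E is bounded from below
    (hEbdd : ∃ m : ℝ, ∀ x : X, m ≤ E x)
    -- E is (sequentially) lower semicontinuous w.r.t. the weak topology of X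
    (hElsc : ∀ (x : X) (u : ℕ → X), WeakTendsto u x →
      ((E x : EReal)) ≤ liminf (fun n => ((E (u n) : EReal))) atTop)
    -- E is continuous w.r.t. the norm topology of X
    (hEcont : Continuous E)
    (p : ℝ) (hp : 1 < p)
    (lam : ℕ → ℝ) (hlam_pos : ∀ n, 0 < lam n) (hlam : Tendsto lam atTop atTop)
    (A : ℕ → Set X)
    -- the penalized functionals with right-hand side f
    (Fn : (X →L[ℝ] ℝ) → ℕ → X → EReal)
    (hFn : ∀ (f : X →L[ℝ] ℝ) (n : ℕ) (x : X), Fn f n x =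
      if x ∈ A n then ((E x + lam n * ‖γ x‖ ^ p - f x : ℝ) : EReal) else ⊤)
    -- the limit functionals with right-hand side f
    (F : (X →L[ℝ] ℝ) → X → EReal)
    (hF : ∀ (f : X →L[ℝ] ℝ) (x : X),
      F f x = if γ x = 0 then ((E x - f x : ℝ) : EReal) else ⊤)
    -- the second norm, encoded by an injective dense-range embedding j : X → Y
    (j : X →L[ℝ] Y) (hj_inj : Function.Injective j) (hj_dense : DenseRange j)
    -- Assumption (A4): j is completely continuous
    (hA4 : ∀ (u : ℕ → X) (x : X), WeakTendsto u x →
      Tendsto (fun n => j (u n)) atTop (𝓝 (j x)))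
    -- weakly convergent right-hand sides
    (g : ℕ → (Y →L[ℝ] ℝ)) (g₀ : Y →L[ℝ] ℝ)
    (hg : ∀ y : Y, Tendsto (fun n => g n y) atTop (𝓝 (g₀ y))) :
    -- liminf inequality
    (∀ (x : X) (u : ℕ → X), WeakTendsto u x →
        F (g₀.comp j) x ≤ liminf (fun n => Fn ((g n).comp j) n (u n)) atTop) ∧
      -- divergence at points violating the constraint
      (∀ (x : X) (u : ℕ → X), WeakTendsto u x → γ x ≠ 0 →
        liminf (fun n => Fn ((g n).comp j) n (u n)) atTop = ⊤) :=
  deep_ritz_liminf_varying_rhs_general γ E hElsc p hp lam hlam A Fn hFn F hF j hA4 g g₀ hg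
end
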